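/- Let a, b ≥ 0 with (n−2)b ≥ 2a, and let A = A(n,-a,b) be the n×n matrix with -a on the diagonal and b elsewhere. For 2 ≤ p ≤ ∞, the induced p-norm of A satisfies (n−1)b − a ≤ ‖A‖_p ≤ ((n−1)b−a)^{2/p}·((n−1)b+a)^{1−2/p}. -/

import Mathlib

open scoped BigOperators ENNReal

/-- The `ℓ^p` norm of a vector in `ℝⁿ`, for `p ∈ [1, ∞]`. -/
noncomputable def vecPNorm {n : ℕ} (p : ℝ≥0∞) (x : Fin n → ℝ) : ℝ :=
  if p = ∞ then ⨆ i, |x i| else (∑ i, |x i| ^ p.toReal) ^ (1 / p.toReal)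

/-- The operator norm of a matrix acting on `(ℝⁿ, ‖·‖_p)`,
    i.e. `sup_{x ≠ 0} ‖Ax‖_p / ‖x‖_p`. -/
noncomputable def matPNorm {n : ℕ} (p : ℝ≥0∞) (A : Matrix (Fin n) (Fin n) ℝ) : ℝ :=
  sSup {r : ℝ | ∃ x : Fin n → ℝ, x ≠ 0 ∧ r = vecPNorm p (A.mulVec x) / vecPNorm p x}

/-- The circulant matrix `A(n, a, b)` with `a` on the diagonal and `b` elsewhere. -/
def circA (n : ℕ) (a b : ℝ) : Matrix (Fin n) (Fin n) ℝ :=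
  Matrix.of fun i j => if i = j then a else b

/-!
Both bounds come from the spectral picture of `A = A(n, -a, b)`: the constant vector is an
eigenvector with eigenvalue `(n-1)b - a ≥ 0`, which gives the lower bound for every `p`. For the
upper bound, `A` is symmetric with eigenvalues `(n-1)b - a` and `-(a + b)`, so under
`(n-2)b ≥ 2a` its `ℓ²` operator norm is `(n-1)b - a`, while its `ℓ^∞` operator norm is the
maximal absolute row sum `(n-1)b + a`. Riesz–Thorin interpolates between the two, through
Hadamard's three lines theorem applied to `z ↦ ⟨Y z, A X z⟩`, where `X z` and `Y z`
are the complex powers `sign(t)|t|^w` of a unit vector of `ℓ^p` and of a dual unit vector of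
`ℓ^{p'}`, with exponents chosen so that both are unchanged at `z = 2/p`.
-/

open Complex Matrix

/-- `sign t * |t| ^ w`, written so that it is entire in `w` and vanishes identically at `t = 0`. -/
noncomputable def signedCpow (t : ℝ) (w : ℂ) : ℂ := t * exp ((w - 1) * Real.log |t|)

lemma signedCpow_one (t : ℝ) : signedCpow t 1 = t := by simp [signedCpow]

@[fun_prop]
lemma differentiable_signedCpow (t : ℝ) : Differentiable ℂ (signedCpow t) := by
  unfold signedCpow; fun_prop

lemma norm_signedCpow_le (t : ℝ) (w : ℂ) : ‖signedCpow t w‖ ≤ |t| ^ w.re := by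
  rcases eq_or_ne t 0 with rfl | ht
  · simpa [signedCpow] using Real.rpow_nonneg le_rfl _
  have ht' : 0 < |t| := abs_pos.2 ht
  rw [signedCpow, norm_mul, norm_real, norm_exp, Real.norm_eq_abs, re_mul_ofReal, sub_re, one_re,
    mul_comm (w.re - 1), ← Real.rpow_def_of_pos ht', Real.rpow_sub_one ht'.ne',
    mul_div_cancel₀ _ ht'.ne']

lemma sq_norm_signedCpow_le (t : ℝ) (w : ℂ) : ‖signedCpow t w‖ ^ 2 ≤ |t| ^ (w.re * 2) := by
  rw [show w.re * 2 = w.re * (2 : ℕ) by norm_num, Real.rpow_mul_natCast (abs_nonneg t)]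
  gcongr
  exact norm_signedCpow_le t w

lemma rpow_le_one_add_rpow {u e s : ℝ} (hu : 0 ≤ u) (he : 0 ≤ e) (hes : e ≤ s) :
    u ^ e ≤ 1 + u ^ s := by
  rcases le_or_gt u 1 with h | h
  · linarith [Real.rpow_le_one hu h he, Real.rpow_nonneg hu s]
  · linarith [Real.rpow_le_rpow_of_exponent_le h.le hes]

section RieszThorin

variable {ι : Type*} [Fintype ι]

lemma norm_dotProduct_le (u v : ι → ℂ) : ‖u ⬝ᵥ v‖ ≤ ∑ i, ‖u i‖ * ‖v i‖ := by
  simpa only [dotProduct, norm_mul] using norm_sum_le Finset.univ fun i => u i * v i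

lemma norm_map_ofReal_mulVec_apply_le (M : Matrix ι ι ℝ) (w : ι → ℂ) (i : ι) :
    ‖(M.map ofReal *ᵥ w) i‖ ≤ ∑ j, |M i j| * ‖w j‖ := by
  simpa only [mulVec, dotProduct, map_apply, norm_mul, norm_real, Real.norm_eq_abs]
    using norm_sum_le Finset.univ fun j => (M i j : ℂ) * w j

lemma norm_dotProduct_map_ofReal_mulVec_le (M : Matrix ι ι ℝ) (u w : ι → ℂ) :
    ‖u ⬝ᵥ (M.map ofReal *ᵥ w)‖ ≤ ∑ i, ‖u i‖ * ∑ j, |M i j| * ‖w j‖ :=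
  (norm_dotProduct_le _ _).trans <| by
    gcongr with i
    exact norm_map_ofReal_mulVec_apply_le M w i

lemma re_map_ofReal_mulVec (M : Matrix ι ι ℝ) (w : ι → ℂ) (i : ι) :
    ((M.map ofReal *ᵥ w) i).re = (M *ᵥ fun j => (w j).re) i := by
  simp [mulVec, dotProduct, Complex.re_sum]

lemma im_map_ofReal_mulVec (M : Matrix ι ι ℝ) (w : ι → ℂ) (i : ι) :
    ((M.map ofReal *ᵥ w) i).im = (M *ᵥ fun j => (w j).im) i := by
  simp [mulVec, dotProduct, Complex.im_sum]

lemma sum_sq_norm_map_ofReal_mulVec_le {M : Matrix ι ι ℝ} {K : ℝ}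
    (h : ∀ x, ∑ i, (M *ᵥ x) i ^ 2 ≤ K ^ 2 * ∑ i, x i ^ 2) (w : ι → ℂ) :
    ∑ i, ‖(M.map ofReal *ᵥ w) i‖ ^ 2 ≤ K ^ 2 * ∑ i, ‖w i‖ ^ 2 := by
  have hsq (z : ℂ) : ‖z‖ ^ 2 = z.re ^ 2 + z.im ^ 2 := by
    rw [Complex.sq_norm, normSq_apply]; ring
  simp only [hsq, re_map_ofReal_mulVec, im_map_ofReal_mulVec, Finset.sum_add_distrib, mul_add]
  exact add_le_add (h _) (h _)

lemma norm_dotProduct_map_ofReal_mulVec_le_of_norm_le_one {M : Matrix ι ι ℝ} {K : ℝ}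
    (hK : 0 ≤ K) (h : ∀ i, ∑ j, |M i j| ≤ K) {u w : ι → ℂ} (hu : ∑ i, ‖u i‖ ≤ 1)
    (hw : ∀ j, ‖w j‖ ≤ 1) : ‖u ⬝ᵥ (M.map ofReal *ᵥ w)‖ ≤ K :=
  calc ‖u ⬝ᵥ (M.map ofReal *ᵥ w)‖ ≤ ∑ i, ‖u i‖ * ∑ j, |M i j| * ‖w j‖ :=
        norm_dotProduct_map_ofReal_mulVec_le M u w
    _ ≤ ∑ i, ‖u i‖ * K := by
        gcongr with i
        exact (Finset.sum_le_sum fun j _ => mul_le_of_le_one_right (abs_nonneg _) (hw j)).trans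
          (h i)
    _ ≤ K := by rw [← Finset.sum_mul]; exact mul_le_of_le_one_left hK hu

lemma norm_dotProduct_map_ofReal_mulVec_le_of_sum_sq_le_one {M : Matrix ι ι ℝ} {K : ℝ}
    (hK : 0 ≤ K) (h : ∀ x, ∑ i, (M *ᵥ x) i ^ 2 ≤ K ^ 2 * ∑ i, x i ^ 2) {u w : ι → ℂ}
    (hu : ∑ i, ‖u i‖ ^ 2 ≤ 1) (hw : ∑ i, ‖w i‖ ^ 2 ≤ 1) : ‖u ⬝ᵥ (M.map ofReal *ᵥ w)‖ ≤ K :=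
  calc ‖u ⬝ᵥ (M.map ofReal *ᵥ w)‖ ≤ ∑ i, ‖u i‖ * ‖(M.map ofReal *ᵥ w) i‖ := norm_dotProduct_le _ _
    _ ≤ √(∑ i, ‖u i‖ ^ 2) * √(∑ i, ‖(M.map ofReal *ᵥ w) i‖ ^ 2) :=
        Real.sum_mul_le_sqrt_mul_sqrt _ _ _
    _ ≤ 1 * √(K ^ 2 * 1) := by
        gcongr
        · exact Real.sqrt_le_one.mpr hu
        · exact (sum_sq_norm_map_ofReal_mulVec_le h w).trans (by gcongr)
    _ = K := by rw [one_mul, mul_one, Real.sqrt_sq hK]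

/-- For unit vectors `x ∈ ℓ^q` and `y ∈ ℓ^(q/(q-1))`, the two factors lie, on `re z = 0`, in the
unit cube and in the unit ball of `ℓ¹`, and on `re z = 1` both in the unit ball of `ℓ²`; at
`z = 2 / q` they are `x` and `y`. -/
noncomputable def rieszThorinFamily (M : Matrix ι ι ℝ) (q : ℝ) (x y : ι → ℝ) (z : ℂ) : ℂ :=
  (fun i => signedCpow (y i) ((q / (q - 1) : ℝ) * (1 - z / 2))) ⬝ᵥ
    (M.map ofReal *ᵥ fun j => signedCpow (x j) ((q / 2 : ℝ) * z))

section rieszThorinFamily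

variable (M : Matrix ι ι ℝ) {q : ℝ} (x y : ι → ℝ)

lemma re_rieszThorinFamily_exponents (z : ℂ) :
    ((q / 2 : ℝ) * z).re = q / 2 * z.re ∧
      ((q / (q - 1) : ℝ) * (1 - z / 2)).re = q / (q - 1) * (1 - z.re / 2) :=
  ⟨re_ofReal_mul _ _, by rw [re_ofReal_mul]; simp⟩

lemma rieszThorinFamily_two_div (hq : 1 < q) :
    rieszThorinFamily M q x y (2 / q : ℝ) = (y ⬝ᵥ (M *ᵥ x) : ℝ) := by
  have hq₀ : q ≠ 0 := by positivity
  have hq₁ : q - 1 ≠ 0 := by linarith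
  have hX : ((q / 2 : ℝ) : ℂ) * ((2 / q : ℝ) : ℂ) = 1 := by norm_cast; field_simp
  have hY : ((q / (q - 1) : ℝ) : ℂ) * (1 - ((2 / q : ℝ) : ℂ) / 2) = 1 := by
    norm_cast; field_simp
  simp only [rieszThorinFamily, hX, hY, signedCpow_one]
  rw [← ofRealHom_eq_coe, RingHom.map_dotProduct ofRealHom]
  congr 1
  ext i
  exact (RingHom.map_mulVec ofRealHom M x i).symm

lemma differentiable_rieszThorinFamily : Differentiable ℂ (rieszThorinFamily M q x y) := by
  unfold rieszThorinFamily
  simp only [dotProduct, mulVec]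
  fun_prop

lemma bddAbove_rieszThorinFamily (hq : 1 < q) :
    BddAbove ((norm ∘ rieszThorinFamily M q x y) ''
      HadamardThreeLines.verticalClosedStrip 0 1) := by
  have hr : 0 ≤ q / (q - 1) := div_nonneg (by linarith) (by linarith)
  refine ⟨∑ i, (1 + |y i| ^ (q / (q - 1))) * ∑ j, |M i j| * (1 + |x j| ^ (q / 2)), ?_⟩
  rintro _ ⟨z, ⟨hz₀, hz₁⟩, rfl⟩
  obtain ⟨hX, hY⟩ := re_rieszThorinFamily_exponents (q := q) z
  refine (norm_dotProduct_map_ofReal_mulVec_le M _ _).trans ?_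
  gcongr with i _ j
  · refine (norm_signedCpow_le _ _).trans (rpow_le_one_add_rpow (abs_nonneg _) ?_ ?_) <;>
      rw [hY] <;> nlinarith
  · refine (norm_signedCpow_le _ _).trans (rpow_le_one_add_rpow (abs_nonneg _) ?_ ?_) <;>
      rw [hX] <;> nlinarith

variable {M x y}

lemma norm_rieszThorinFamily_le_of_re_eq_zero {K : ℝ} (hK : 0 ≤ K) (h : ∀ i, ∑ j, |M i j| ≤ K)
    (hy : ∑ i, |y i| ^ (q / (q - 1)) ≤ 1) {z : ℂ} (hz : z.re = 0) :
    ‖rieszThorinFamily M q x y z‖ ≤ K := by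
  obtain ⟨hX, hY⟩ := re_rieszThorinFamily_exponents (q := q) z
  refine norm_dotProduct_map_ofReal_mulVec_le_of_norm_le_one hK h (hy.trans' ?_) fun j => ?_
  · gcongr with i
    exact (norm_signedCpow_le _ _).trans_eq (by rw [hY, hz]; norm_num)
  · exact (norm_signedCpow_le _ _).trans_eq (by rw [hX, hz, mul_zero, Real.rpow_zero])

lemma norm_rieszThorinFamily_le_of_re_eq_one {K₂ : ℝ} (hK₂ : 0 ≤ K₂)
    (h₂ : ∀ x, ∑ i, (M *ᵥ x) i ^ 2 ≤ K₂ ^ 2 * ∑ i, x i ^ 2) (hx : ∑ j, |x j| ^ q ≤ 1)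
    (hy : ∑ i, |y i| ^ (q / (q - 1)) ≤ 1) {z : ℂ} (hz : z.re = 1) :
    ‖rieszThorinFamily M q x y z‖ ≤ K₂ := by
  obtain ⟨hX, hY⟩ := re_rieszThorinFamily_exponents (q := q) z
  refine norm_dotProduct_map_ofReal_mulVec_le_of_sum_sq_le_one hK₂ h₂ (hy.trans' ?_)
    (hx.trans' ?_)
  · gcongr with i
    exact (sq_norm_signedCpow_le _ _).trans_eq (by rw [hY, hz]; ring_nf)
  · gcongr with j
    exact (sq_norm_signedCpow_le _ _).trans_eq (by rw [hX, hz]; ring_nf)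

end rieszThorinFamily

theorem abs_dotProduct_mulVec_le_interp {M : Matrix ι ι ℝ} {K₂ K : ℝ} (hK₂ : 0 ≤ K₂)
    (hK : 0 ≤ K) (h₂ : ∀ x, ∑ i, (M *ᵥ x) i ^ 2 ≤ K₂ ^ 2 * ∑ i, x i ^ 2)
    (h : ∀ i, ∑ j, |M i j| ≤ K) {q : ℝ} (hq : 2 ≤ q) {x y : ι → ℝ}
    (hx : ∑ j, |x j| ^ q ≤ 1) (hy : ∑ i, |y i| ^ (q / (q - 1)) ≤ 1) :
    |y ⬝ᵥ (M *ᵥ x)| ≤ K ^ (1 - 2 / q) * K₂ ^ (2 / q) := by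
  have hθ : ((2 / q : ℝ) : ℂ) ∈ HadamardThreeLines.verticalClosedStrip 0 1 := by
    rw [HadamardThreeLines.verticalClosedStrip, Set.mem_preimage, ofReal_re]
    exact ⟨by positivity, (div_le_one (by positivity)).mpr hq⟩
  have := HadamardThreeLines.norm_le_interp_of_mem_verticalClosedStrip₀₁' _ hθ
    (differentiable_rieszThorinFamily M x y).diffContOnCl
    (bddAbove_rieszThorinFamily M x y (by linarith))
    (fun z hz => norm_rieszThorinFamily_le_of_re_eq_zero hK h hy hz)
    (fun z hz => norm_rieszThorinFamily_le_of_re_eq_one hK₂ h₂ hx hy hz)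
  rwa [rieszThorinFamily_two_div M x y (by linarith), norm_real, Real.norm_eq_abs,
    ofReal_re] at this

lemma sum_abs_rpow_eq_norm_toLp_rpow {p : ℝ≥0∞} (hp : 0 < p.toReal) (x : ι → ℝ) :
    ∑ i, |x i| ^ p.toReal = ‖WithLp.toLp p x‖ ^ p.toReal := by
  rw [PiLp.norm_eq_sum hp, ← Real.rpow_mul (by positivity), one_div_mul_cancel hp.ne',
    Real.rpow_one]
  rfl

lemma exists_dotProduct_eq_sum_abs_rpow {q : ℝ} (hq : 1 < q) (v : ι → ℝ) :
    ∃ y : ι → ℝ, ∑ i, |y i| ^ (q / (q - 1)) = ∑ i, |v i| ^ q ∧ y ⬝ᵥ v = ∑ i, |v i| ^ q := by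
  -- the equality case of Hölder's inequality
  refine ⟨fun i => v i * |v i| ^ (q - 2), Finset.sum_congr rfl fun i _ => ?_,
    Finset.sum_congr rfl fun i _ => ?_⟩
  · have habs : |v i * |v i| ^ (q - 2)| = |v i| ^ (q - 1) := by
      rw [abs_mul, abs_of_nonneg (Real.rpow_nonneg (abs_nonneg _) _),
        ← Real.rpow_one_add' (abs_nonneg _) (by linarith)]
      ring_nf
    have : q - 1 ≠ 0 := by linarith
    rw [habs, ← Real.rpow_mul (abs_nonneg _)]
    field_simp
  · rw [show v i * |v i| ^ (q - 2) * v i = |v i| ^ (2 : ℝ) * |v i| ^ (q - 2) by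
      rw [Real.rpow_two, sq_abs]; ring, ← Real.rpow_add' (abs_nonneg _) (by linarith)]
    ring_nf

lemma norm_toLp_le_of_forall_abs_dotProduct_le {p : ℝ≥0∞} [Fact (1 ≤ p)] (hp : 1 < p.toReal)
    {v : ι → ℝ} {C : ℝ}
    (h : ∀ y : ι → ℝ, ∑ i, |y i| ^ (p.toReal / (p.toReal - 1)) ≤ 1 → |y ⬝ᵥ v| ≤ C) :
    ‖WithLp.toLp p v‖ ≤ C := by
  set q := p.toReal
  have hr : 0 < q / (q - 1) := div_pos (by linarith) (by linarith)
  have hC : 0 ≤ C := by simpa using h 0 (by simp [Real.zero_rpow hr.ne'])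
  obtain ⟨y, hy, hyv⟩ := exists_dotProduct_eq_sum_abs_rpow hp v
  rw [sum_abs_rpow_eq_norm_toLp_rpow (by linarith)] at hy hyv
  obtain hN | hN := (norm_nonneg (WithLp.toLp p v)).eq_or_lt
  · rw [← hN]; exact hC
  set N := ‖WithLp.toLp p v‖
  have hNq : N ^ (q - 1) = N ^ q / N := Real.rpow_sub_one hN.ne' q
  have key := h ((N ^ (q - 1))⁻¹ • y) ?_
  · rwa [smul_dotProduct, hyv, smul_eq_mul, hNq, inv_div, div_mul_cancel₀ _ (by positivity),
      abs_of_pos hN] at key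
  · have hq₁ : q - 1 ≠ 0 := by linarith
    simp only [Pi.smul_apply, smul_eq_mul, abs_mul, Real.mul_rpow (abs_nonneg _) (abs_nonneg _)]
    rw [← Finset.mul_sum, hy, abs_of_pos (by positivity), Real.inv_rpow (by positivity),
      ← Real.rpow_mul hN.le, show (q - 1) * (q / (q - 1)) = q by field_simp,
      inv_mul_cancel₀ (by positivity)]

lemma norm_toLp_top_mulVec_le {M : Matrix ι ι ℝ} {K : ℝ} (hK : 0 ≤ K)
    (h : ∀ i, ∑ j, |M i j| ≤ K) (x : ι → ℝ) :
    ‖WithLp.toLp ∞ (M *ᵥ x)‖ ≤ K * ‖WithLp.toLp ∞ x‖ := by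
  rw [PiLp.norm_eq_ciSup]
  refine Real.iSup_le (fun i => ?_) (by positivity)
  calc ‖(M *ᵥ x) i‖ ≤ ∑ j, |M i j| * |x j| := by
        simpa only [mulVec, dotProduct, norm_mul, Real.norm_eq_abs]
          using norm_sum_le Finset.univ fun j => M i j * x j
    _ ≤ ∑ j, |M i j| * ‖WithLp.toLp ∞ x‖ := by
        gcongr with j
        exact PiLp.norm_apply_le (WithLp.toLp ∞ x) j
    _ ≤ K * ‖WithLp.toLp ∞ x‖ := by rw [← Finset.sum_mul]; gcongr; exact h i

theorem norm_toLp_mulVec_le_interp {M : Matrix ι ι ℝ} {K₂ K : ℝ} (hK₂ : 0 ≤ K₂) (hK : 0 ≤ K)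
    (h₂ : ∀ x, ∑ i, (M *ᵥ x) i ^ 2 ≤ K₂ ^ 2 * ∑ i, x i ^ 2) (h : ∀ i, ∑ j, |M i j| ≤ K)
    {p : ℝ≥0∞} [Fact (1 ≤ p)] (hp : 2 ≤ p) (x : ι → ℝ) :
    ‖WithLp.toLp p (M *ᵥ x)‖ ≤
      K ^ (1 - 2 / p.toReal) * K₂ ^ (2 / p.toReal) * ‖WithLp.toLp p x‖ := by
  obtain rfl | hp_top := eq_or_ne p ∞
  · -- `(∞ : ℝ≥0∞).toReal = 0`, so the bound reads `K * ‖x‖`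
    simpa using norm_toLp_top_mulVec_le hK h x
  have hq : 2 ≤ p.toReal := by
    simpa using (ENNReal.toReal_le_toReal (by norm_num) hp_top).mpr hp
  obtain hx | hx := (norm_nonneg (WithLp.toLp p x)).eq_or_lt
  · have hx₀ : x = 0 := by simpa using hx.symm
    simp [hx₀]
  set N := ‖WithLp.toLp p x‖
  have hx₁ : ∑ j, |(N⁻¹ • x) j| ^ p.toReal ≤ 1 := by
    rw [sum_abs_rpow_eq_norm_toLp_rpow (by linarith), WithLp.toLp_smul, norm_smul, norm_inv,
      Real.norm_of_nonneg hx.le, inv_mul_cancel₀ hx.ne', Real.one_rpow]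
  have key := norm_toLp_le_of_forall_abs_dotProduct_le (v := M *ᵥ (N⁻¹ • x)) (by linarith)
    fun y hy => abs_dotProduct_mulVec_le_interp hK₂ hK h₂ h hq hx₁ hy
  rw [mulVec_smul, WithLp.toLp_smul, norm_smul, norm_inv, Real.norm_of_nonneg hx.le,
    inv_mul_le_iff₀ hx] at key
  exact key.trans_eq (mul_comm _ _)

end RieszThorin

lemma vecPNorm_eq_norm_toLp {n : ℕ} {p : ℝ≥0∞} (hp : p ≠ 0) (x : Fin n → ℝ) :
    vecPNorm p x = ‖WithLp.toLp p x‖ := by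
  rw [vecPNorm]
  split_ifs with h
  · subst h; rfl
  · rw [PiLp.norm_eq_sum (ENNReal.toReal_pos hp h)]; rfl

section matPNorm

variable {n : ℕ} {p : ℝ≥0∞} [Fact (1 ≤ p)] {A : Matrix (Fin n) (Fin n) ℝ} {C : ℝ}

lemma vecPNorm_mulVec_div_le (hC : 0 ≤ C)
    (h : ∀ x, ‖WithLp.toLp p (A *ᵥ x)‖ ≤ C * ‖WithLp.toLp p x‖) (x : Fin n → ℝ) :
    vecPNorm p (A *ᵥ x) / vecPNorm p x ≤ C := by
  have hp : p ≠ 0 := (zero_lt_one.trans_le Fact.out).ne'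
  rw [vecPNorm_eq_norm_toLp hp, vecPNorm_eq_norm_toLp hp]
  exact div_le_of_le_mul₀ (norm_nonneg _) hC (h x)

lemma matPNorm_le (hC : 0 ≤ C)
    (h : ∀ x, ‖WithLp.toLp p (A *ᵥ x)‖ ≤ C * ‖WithLp.toLp p x‖) : matPNorm p A ≤ C :=
  Real.sSup_le (by rintro _ ⟨x, -, rfl⟩; exact vecPNorm_mulVec_div_le hC h x) hC

lemma abs_le_matPNorm_of_mulVec_eq_smul (hC : 0 ≤ C)
    (h : ∀ x, ‖WithLp.toLp p (A *ᵥ x)‖ ≤ C * ‖WithLp.toLp p x‖) {v : Fin n → ℝ} {c : ℝ}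
    (hv : v ≠ 0) (hAv : A *ᵥ v = c • v) : |c| ≤ matPNorm p A := by
  have hp : p ≠ 0 := (zero_lt_one.trans_le Fact.out).ne'
  refine le_csSup ⟨C, ?_⟩ ⟨v, hv, ?_⟩
  · rintro _ ⟨x, -, rfl⟩; exact vecPNorm_mulVec_div_le hC h x
  · rw [hAv, vecPNorm_eq_norm_toLp hp, vecPNorm_eq_norm_toLp hp, WithLp.toLp_smul, norm_smul,
      Real.norm_eq_abs, mul_div_assoc, div_self (by simpa using hv), mul_one]

end matPNorm

section circA

variable {n : ℕ} (a b : ℝ)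

lemma circA_mulVec_apply (x : Fin n → ℝ) (i : Fin n) :
    (circA n a b *ᵥ x) i = b * ∑ j, x j + (a - b) * x i := by
  have hrow (j : Fin n) : circA n a b i j = b + if i = j then a - b else 0 := by
    simp only [circA, of_apply]; split_ifs <;> ring
  simp only [mulVec, dotProduct, hrow, add_mul, ite_mul, zero_mul, Finset.sum_add_distrib,
    Finset.sum_ite_eq, Finset.mem_univ, if_true, Finset.mul_sum]

lemma circA_mulVec_one : circA n a b *ᵥ 1 = (((n : ℝ) - 1) * b + a) • 1 := by
  ext i
  simp only [circA_mulVec_apply, Pi.one_apply, Finset.sum_const, Finset.card_univ,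
    Fintype.card_fin, nsmul_eq_mul, mul_one, Pi.smul_apply, smul_eq_mul]
  ring

lemma sum_abs_circA_apply (i : Fin n) : ∑ j, |circA n a b i j| = ((n : ℝ) - 1) * |b| + |a| := by
  have hrow (j : Fin n) : |circA n a b i j| = |b| + if i = j then |a| - |b| else 0 := by
    simp only [circA, of_apply]; split_ifs <;> ring
  simp only [hrow, Finset.sum_add_distrib, Finset.sum_ite_eq, Finset.mem_univ, if_true,
    Finset.sum_const, Finset.card_univ, Fintype.card_fin, nsmul_eq_mul]
  ring

lemma sum_sq_circA_mulVec_le {K : ℝ} (h₁ : |((n : ℝ) - 1) * b + a| ≤ K) (h₂ : |a - b| ≤ K)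
    (x : Fin n → ℝ) : ∑ i, (circA n a b *ᵥ x) i ^ 2 ≤ K ^ 2 * ∑ i, x i ^ 2 := by
  set S := ∑ j, x j
  set Q := ∑ j, x j ^ 2
  have hQ : 0 ≤ Q := by positivity
  have hCS : S ^ 2 ≤ n * Q := by
    simpa using sq_sum_le_card_mul_sum_sq (s := Finset.univ) (f := x)
  have hexp : ∑ i, (circA n a b *ᵥ x) i ^ 2 =
      (a - b) ^ 2 * Q + b * (n * b + 2 * (a - b)) * S ^ 2 := by
    simp only [circA_mulVec_apply, add_sq, Finset.sum_add_distrib, mul_pow, ← Finset.mul_sum,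
      Finset.sum_const, Finset.card_univ, Fintype.card_fin, nsmul_eq_mul]
    ring
  have h₁sq : (((n : ℝ) - 1) * b + a) ^ 2 ≤ K ^ 2 := sq_le_sq' (abs_le.mp h₁).1 (abs_le.mp h₁).2
  have h₂sq : (a - b) ^ 2 ≤ K ^ 2 := sq_le_sq' (abs_le.mp h₂).1 (abs_le.mp h₂).2
  rw [hexp]
  -- `n * (b * (n * b + 2 * (a - b))) = ((n - 1) * b + a) ^ 2 - (a - b) ^ 2`: according to its
  -- sign, the bound is governed by one eigenvalue or the other.
  rcases le_total (b * (n * b + 2 * (a - b))) 0 with hc | hc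
  · nlinarith [mul_nonpos_of_nonpos_of_nonneg hc (sq_nonneg S)]
  · nlinarith [mul_le_mul_of_nonneg_left hCS hc]

end circA

theorem stmt_18 (n : ℕ) (hn : 2 ≤ n) (a b : ℝ) (ha : 0 ≤ a) (hb : 0 ≤ b)
    (hcase : 2 * a ≤ ((n : ℝ) - 2) * b) (p : ℝ≥0∞) (hp : 2 ≤ p) :
    ((n : ℝ) - 1) * b - a ≤ matPNorm p (circA n (-a) b) ∧
      matPNorm p (circA n (-a) b) ≤
        (((n : ℝ) - 1) * b - a) ^ (2 / p.toReal) *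
          (((n : ℝ) - 1) * b + a) ^ (1 - 2 / p.toReal) := by
  have : Fact (1 ≤ p) := ⟨le_trans (by norm_num) hp⟩
  have : NeZero n := ⟨by omega⟩
  have hK₂ : 0 ≤ ((n : ℝ) - 1) * b - a := by nlinarith
  have hK : 0 ≤ ((n : ℝ) - 1) * b + a := by nlinarith
  have hbound := norm_toLp_mulVec_le_interp hK₂ hK
    (sum_sq_circA_mulVec_le (-a) b (by rw [← sub_eq_add_neg, abs_of_nonneg hK₂])
      (by rw [abs_of_nonpos (by linarith)]; linarith))
    (fun i => by rw [sum_abs_circA_apply, abs_neg, abs_of_nonneg ha, abs_of_nonneg hb]) hp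
  refine ⟨?_, ?_⟩
  · have := abs_le_matPNorm_of_mulVec_eq_smul (by positivity) hbound one_ne_zero
      (circA_mulVec_one (-a) b)
    rwa [← sub_eq_add_neg, abs_of_nonneg hK₂] at this
  · rw [mul_comm]
    exact matPNorm_le (by positivity) hbound
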